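/- Let γ : ℝ → 𝕋 = ℝ/ℤ be a periodic C¹ curve with lift γ̄ : ℝ → ℝ such that there do not exist times t₁ < t₂ with γ(t₁) = γ(t₂) and γ̇(t₁) ≠ γ̇(t₂) (graph property: the velocity is a function of position). Then γ̄ is monotone. -/

import Mathlib

/-!
If `γ̄' b < 0`, the graph property makes the level `γ̄ b` a barrier for `t > b`: whenever `γ̄`
comes back to it, its velocity is again `γ̄' b < 0`, so it cannot cross upwards, and it cannot
touch it either, since a touching point would be a local maximum. Hence `γ̄ (b + τ) < γ̄ b`.
But `γ̄ (t + τ) - γ̄ t` is a continuous integer-valued function, hence a constant `k`; so a point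
of negative velocity forces `k < 0`, a point of positive velocity forces `k > 0`, and `γ̄'`
cannot change sign.
-/

open Set

theorem AddCircle.exists_add_const_of_coe_periodic {p τ : ℝ} {x : ℝ → ℝ} (hx : Continuous x)
    (hper : ∀ t, (x (t + τ) : AddCircle p) = x t) : ∃ k, ∀ t, x (t + τ) = x t + k := by
  have hmem : MapsTo (fun t ↦ x (t + τ) - x t) univ (AddSubgroup.zmultiples p) := fun t _ ↦
    QuotientAddGroup.eq_iff_sub_mem.mp (hper t)
  refine ⟨x (0 + τ) - x 0, fun t ↦ ?_⟩
  have := isPreconnected_univ.constant_of_mapsTo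
    (SetLike.isDiscrete_iff_discreteTopology.mpr inferInstance)
    (by fun_prop : Continuous fun t ↦ x (t + τ) - x t).continuousOn hmem (mem_univ t) (mem_univ 0)
  linarith

def HasGraphProperty (x : ℝ → ℝ) : Prop :=
  ∀ s t, x s = x t → deriv x s = deriv x t

theorem HasGraphProperty.neg {x : ℝ → ℝ} (hx : HasGraphProperty x) :
    HasGraphProperty (-x) := fun s t hst ↦ by
  simp only [deriv.neg', hx s t (neg_inj.mp hst)]

theorem HasGraphProperty.apply_lt_of_deriv_neg {x : ℝ → ℝ} (hx : HasGraphProperty x)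
    (hdiff : Differentiable ℝ x) {b t : ℝ} (hb : deriv x b < 0) (hbt : b < t) : x t < x b := by
  have hle : ∀ s, b ≤ s → x s ≤ x b := fun s hs ↦
    image_le_of_deriv_right_lt_deriv_boundary hdiff.continuous.continuousOn
      (fun r _ ↦ (hdiff r).hasDerivAt.hasDerivWithinAt) (B := fun _ ↦ x b) le_rfl
      (fun _ ↦ hasDerivAt_const _ _) (fun r _ hr ↦ (hx r b hr).trans_lt hb) ⟨hs, le_rfl⟩
  refine (hle t hbt.le).lt_of_ne fun heq ↦ hb.ne ?_
  have hmax : IsLocalMax x t := by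
    filter_upwards [Ioi_mem_nhds hbt] with s hs
    exact heq ▸ hle s hs.le
  rw [hx b t heq.symm, hmax.deriv_eq_zero]

theorem HasGraphProperty.lt_apply_of_deriv_pos {x : ℝ → ℝ} (hx : HasGraphProperty x)
    (hdiff : Differentiable ℝ x) {a t : ℝ} (ha : 0 < deriv x a) (hat : a < t) : x a < x t :=
  neg_lt_neg_iff.mp <| hx.neg.apply_lt_of_deriv_neg hdiff.neg (by simpa [deriv.neg'] using ha) hat

/-- a periodic `C¹` curve `γ : ℝ → 𝕋 = ℝ/ℤ` with the graph property (velocity is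
a function of position) has a monotone lift `γ̄`. -/
theorem stmt11 (γ : ℝ → AddCircle (1:ℝ)) (γbar : ℝ → ℝ)
    (hlift : ∀ t, γ t = (γbar t : AddCircle (1:ℝ)))
    (hC1 : ContDiff ℝ 1 γbar)
    (τ : ℝ) (hτ : 0 < τ) (hper : ∀ t, γ (t + τ) = γ t)
    (hgraph : ∀ t₁ t₂ : ℝ, γ t₁ = γ t₂ → deriv γbar t₁ = deriv γbar t₂) :
    Monotone γbar ∨ Antitone γbar := by
  have hdiff : Differentiable ℝ γbar := hC1.differentiable one_ne_zero
  have hgraph' : HasGraphProperty γbar := fun s t h ↦ hgraph s t (by rw [hlift, hlift, h])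
  obtain ⟨k, hk⟩ := AddCircle.exists_add_const_of_coe_periodic hdiff.continuous
    fun t ↦ by rw [← hlift, ← hlift, hper]
  by_cases hmono : ∀ t, 0 ≤ deriv γbar t
  · exact .inl (monotone_of_deriv_nonneg hdiff hmono)
  by_cases hanti : ∀ t, deriv γbar t ≤ 0
  · exact .inr (antitone_of_deriv_nonpos hdiff hanti)
  push Not at hmono hanti
  obtain ⟨b, hb⟩ := hmono
  obtain ⟨a, ha⟩ := hanti
  have hk_neg := hgraph'.apply_lt_of_deriv_neg hdiff hb (lt_add_of_pos_right b hτ)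
  have hk_pos := hgraph'.lt_apply_of_deriv_pos hdiff ha (lt_add_of_pos_right a hτ)
  linarith [hk a, hk b]
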